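/- Every simple NM-algebra has at most three elements; the three-element Łukasiewicz chain Ł₃ = {0, 1/2, 1} is (up to isomorphism) the maximum simple algebra in the variety of NM-algebras, i.e., every simple NM-algebra embeds into it. -/
import Mathlib


class ResLat (A : Type*) extends Lattice A, CommMonoid A where
  rbot : A
  himp : A → A → A
  rbot_le : ∀ a : A, rbot ≤ a
  le_one : ∀ a : A, a ≤ 1
  resid : ∀ a b c : A, a * b ≤ c ↔ a ≤ himp b c

namespace ResLat

variable {A : Type*} [ResLat A]

def rneg (a : A) : A := himp a rbot

def Nilpotent (a : A) : Prop := ∃ n : ℕ, 1 ≤ n ∧ a ^ n = rbot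

def Unity (a : A) : Prop := ∀ n : ℕ, 1 ≤ n → Nilpotent (rneg (a ^ n))

def ImpFilter (F : Set A) : Prop :=
  (1 : A) ∈ F ∧ ∀ x y : A, x ∈ F → himp x y ∈ F → y ∈ F

def MaxImpFilter (F : Set A) : Prop :=
  ImpFilter F ∧ F ≠ Set.univ ∧
    ∀ G : Set A, ImpFilter G → F ⊆ G → G = F ∨ G = Set.univ

def Rad (A : Type*) [ResLat A] : Set A :=
  { x | ∀ F : Set A, MaxImpFilter F → x ∈ F }

def Ds (A : Type*) [ResLat A] : Set A := { x | rneg x = rbot }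

def Simple (A : Type*) [ResLat A] : Prop :=
  Nontrivial A ∧ ∀ F : Set A, ImpFilter F → F = {1} ∨ F = Set.univ

def IsHom {B : Type*} [ResLat B] (f : A → B) : Prop :=
  (∀ x y : A, f (x * y) = f x * f y) ∧
  (∀ x y : A, f (himp x y) = himp (f x) (f y)) ∧
  (∀ x y : A, f (x ⊓ y) = f x ⊓ f y) ∧
  (∀ x y : A, f (x ⊔ y) = f x ⊔ f y) ∧
  f rbot = rbot ∧ f 1 = 1

end ResLat

open ResLat

/-- The three-element Łukasiewicz chain Ł₃ = {0, 1/2, 1}. -/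
inductive L3 : Type
  | z  -- 0
  | h  -- 1/2
  | o  -- 1
  deriving DecidableEq

namespace L3

instance : Fintype L3 :=
  ⟨⟨{L3.z, L3.h, L3.o}, by decide⟩, by intro x; cases x <;> decide⟩

def ble : L3 → L3 → Bool
  | .z, _ => true
  | .h, .z => false
  | .h, _ => true
  | .o, .o => true
  | .o, _ => false

/-- Łukasiewicz conjunction max(0, x + y - 1) on {0, 1/2, 1}. -/
def mul : L3 → L3 → L3
  | .o, x => x
  | x, .o => x
  | _, _ => .z

/-- Łukasiewicz implication min(1, 1 - x + y) on {0, 1/2, 1}. -/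
def imp : L3 → L3 → L3
  | .z, _ => .o
  | .h, .z => .h
  | .h, _ => .o
  | .o, y => y

instance : LE L3 := ⟨fun x y => ble x y = true⟩

instance : DecidableRel ((· ≤ ·) : L3 → L3 → Prop) :=
  fun a b => inferInstanceAs (Decidable (ble a b = true))

instance : Lattice L3 where
  le := (· ≤ ·)
  le_refl := by decide
  le_trans := by decide
  le_antisymm := by decide
  sup x y := if ble x y then y else x
  le_sup_left := by decide
  le_sup_right := by decide
  sup_le := by decide
  inf x y := if ble x y then x else y
  inf_le_left := by decide
  inf_le_right := by decide
  le_inf := by decide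

instance : CommMonoid L3 where
  mul := mul
  one := o
  mul_assoc := by decide
  one_mul := by decide
  mul_one := by decide
  mul_comm := by decide

instance : ResLat L3 where
  rbot := z
  himp := imp
  rbot_le := by decide
  le_one := by decide
  resid := by decide

end L3

section Helper

open ResLat

variable {A : Type*} [ResLat A]

lemma hle (a b c : A) : a * b ≤ c ↔ a ≤ himp b c := resid a b c

lemma le_iff_himp {x y : A} : x ≤ y ↔ himp x y = 1 := by
  constructor
  · intro h
    refine le_antisymm (ResLat.le_one _) ?_
    exact (hle 1 x y).1 (by simpa using h)
  · intro h
    have := (hle (1 : A) x y).2 (by rw [h])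
    simpa using this

lemma mul_mono_l {a b : A} (c : A) (h : a ≤ b) : a * c ≤ b * c := by
  have h1 : b ≤ himp c (b * c) := (hle b c (b * c)).1 le_rfl
  exact (hle a c (b * c)).2 (h.trans h1)

lemma mul_mono_r {a b : A} (c : A) (h : a ≤ b) : c * a ≤ c * b := by
  rw [mul_comm c a, mul_comm c b]; exact mul_mono_l c h

lemma mul_le_l (x y : A) : x * y ≤ x := by
  have := mul_mono_r (c := x) (ResLat.le_one y)
  simpa using this

lemma mul_le_r (x y : A) : x * y ≤ y := by
  rw [mul_comm]; exact mul_le_l y x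

lemma himp_mul_le (x y : A) : himp x y * x ≤ y := (hle _ _ _).2 le_rfl

lemma rbot_mul (x : A) : rbot * x = rbot :=
  le_antisymm (mul_le_l _ _) (ResLat.rbot_le _)

lemma mul_rbot (x : A) : x * rbot = rbot := by rw [mul_comm]; exact rbot_mul x

lemma rl_mul_sup (x y z : A) : x * (y ⊔ z) = x * y ⊔ x * z := by
  apply le_antisymm
  · rw [mul_comm]
    apply (hle _ _ _).2
    apply sup_le
    · exact (hle _ _ _).1 (by rw [mul_comm]; exact le_sup_left)
    · exact (hle _ _ _).1 (by rw [mul_comm]; exact le_sup_right)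
  · exact sup_le (mul_mono_r x le_sup_left) (mul_mono_r x le_sup_right)

lemma himp_one_left (x : A) : himp (1 : A) x = x := by
  apply le_antisymm
  · have := (hle (himp (1:A) x) 1 x).2 le_rfl
    simpa using this
  · exact (hle x 1 x).1 (by simp)

lemma himp_any_one (x : A) : himp x (1 : A) = 1 := le_iff_himp.1 (ResLat.le_one x)

lemma himp_rbot_any (x : A) : himp (rbot : A) x = 1 := le_iff_himp.1 (ResLat.rbot_le x)

lemma rneg_one : rneg (1 : A) = rbot := himp_one_left rbot

lemma rneg_rbot : rneg (rbot : A) = 1 := himp_rbot_any rbot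

lemma rneg_anti {x y : A} (h : x ≤ y) : rneg y ≤ rneg x := by
  apply (hle _ _ _).1
  calc rneg y * x ≤ rneg y * y := mul_mono_r _ h
    _ ≤ rbot := himp_mul_le y rbot

lemma all_eq_of_rbot_eq_one (h : (rbot : A) = 1) (x y : A) : x = y := by
  have hx : x ≤ y := (ResLat.le_one x).trans (h ▸ ResLat.rbot_le y)
  have hy : y ≤ x := (ResLat.le_one y).trans (h ▸ ResLat.rbot_le x)
  exact le_antisymm hx hy

lemma rbot_ne_one_of_simple (hs : Simple A) : (rbot : A) ≠ 1 := by
  intro h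
  obtain ⟨x, y, hxy⟩ := hs.1
  exact hxy (all_eq_of_rbot_eq_one h x y)

lemma exists_nilp (hs : Simple A) {a : A} (ha : a ≠ 1) :
    ∃ n : ℕ, 1 ≤ n ∧ a ^ n = rbot := by
  set F : Set A := {x | ∃ n : ℕ, a ^ n ≤ x} with hF
  have hFil : ImpFilter F := by
    constructor
    · exact ⟨0, by simp⟩
    · rintro x y ⟨n, hn⟩ ⟨m, hm⟩
      refine ⟨m + n, ?_⟩
      calc a ^ (m + n) = a ^ m * a ^ n := pow_add a m n
        _ ≤ himp x y * a ^ n := mul_mono_l _ hm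
        _ ≤ himp x y * x := mul_mono_r _ hn
        _ ≤ y := himp_mul_le x y
  rcases hs.2 F hFil with h1 | h2
  · exfalso
    have : a ∈ F := ⟨1, by simp⟩
    rw [h1] at this
    exact ha this
  · have : (rbot : A) ∈ F := by rw [h2]; trivial
    obtain ⟨n, hn⟩ := this
    have hne : a ^ n = rbot := le_antisymm hn (ResLat.rbot_le _)
    rcases Nat.eq_zero_or_pos n with rfl | hp
    · exfalso
      exact rbot_ne_one_of_simple hs (by simpa using hne.symm)
    · exact ⟨n, hp, hne⟩

lemma sup_pow {u v : A} (h : u ⊔ v = 1) : ∀ k : ℕ, u ^ k ⊔ v = 1 := by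
  intro k
  induction k with
  | zero => simp [sup_eq_left.2 (ResLat.le_one v)]
  | succ k ih =>
    have h1 : (u ^ k ⊔ v) * u ≤ u ^ (k + 1) ⊔ v := by
      rw [mul_comm, rl_mul_sup]
      apply sup_le
      · rw [← pow_succ']
        exact le_sup_left
      · exact (mul_le_r u v).trans le_sup_right
    have h2 : (u ^ k ⊔ v) * v ≤ u ^ (k + 1) ⊔ v := (mul_le_r _ _).trans le_sup_right
    have h3 : (u ^ k ⊔ v) * (u ⊔ v) ≤ u ^ (k + 1) ⊔ v := by
      rw [rl_mul_sup]; exact sup_le h1 h2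
    rw [ih, h, one_mul] at h3
    exact le_antisymm (ResLat.le_one _) h3

lemma rl_total (hpl : ∀ x y : A, himp x y ⊔ himp y x = 1) (hs : Simple A)
    (x y : A) : x ≤ y ∨ y ≤ x := by
  by_cases h : himp x y = 1
  · exact Or.inl (le_iff_himp.2 h)
  · obtain ⟨n, _, hn⟩ := exists_nilp hs h
    have h2 := sup_pow (hpl x y) n
    rw [hn] at h2
    rw [sup_eq_right.2 (ResLat.rbot_le _)] at h2
    exact Or.inr (le_iff_himp.2 h2)

lemma sup_eq_one_cases (hpl : ∀ x y : A, himp x y ⊔ himp y x = 1) (hs : Simple A)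
    {a b : A} (h : a ⊔ b = 1) : a = 1 ∨ b = 1 := by
  rcases rl_total hpl hs a b with hab | hba
  · right; rwa [sup_eq_right.2 hab] at h
  · left; rwa [sup_eq_left.2 hba] at h

lemma mul_cases (hpl : ∀ x y : A, himp x y ⊔ himp y x = 1)
    (hwnm : ∀ x y : A, rneg (x * y) ⊔ himp (x ⊓ y) (x * y) = 1)
    (hs : Simple A) (x y : A) : x * y = rbot ∨ x * y = x ⊓ y := by
  rcases sup_eq_one_cases hpl hs (hwnm x y) with h | h
  · left
    have h1 : (1 : A) ≤ himp (x * y) rbot := le_of_eq h.symm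
    have h2 := (hle (1 : A) (x * y) rbot).2 h1
    exact le_antisymm (by simpa using h2) (ResLat.rbot_le _)
  · right
    have h1 : x ⊓ y ≤ x * y := le_iff_himp.2 h
    exact le_antisymm (le_inf (mul_le_l x y) (mul_le_r x y)) h1

lemma rl_idem_pow {a : A} (haa : a * a = a) : ∀ n : ℕ, a ^ (n + 1) = a := by
  intro n
  induction n with
  | zero => simp
  | succ n ih => rw [pow_succ, ih, haa]

lemma mid_sq (hpl : ∀ x y : A, himp x y ⊔ himp y x = 1)
    (hwnm : ∀ x y : A, rneg (x * y) ⊔ himp (x ⊓ y) (x * y) = 1)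
    (hs : Simple A) {a : A} (h0 : a ≠ rbot) (h1 : a ≠ 1) : a * a = rbot := by
  rcases mul_cases hpl hwnm hs a a with h | h
  · exact h
  · exfalso
    rw [inf_idem] at h
    obtain ⟨n, hn1, hn⟩ := exists_nilp hs h1
    obtain ⟨k, rfl⟩ := Nat.exists_eq_add_of_le hn1
    rw [Nat.add_comm, rl_idem_pow h k] at hn
    exact h0 hn

lemma mid_rneg (hpl : ∀ x y : A, himp x y ⊔ himp y x = 1)
    (hinv : ∀ x : A, rneg (rneg x) = x)
    (hwnm : ∀ x y : A, rneg (x * y) ⊔ himp (x ⊓ y) (x * y) = 1)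
    (hs : Simple A) {a : A} (h0 : a ≠ rbot) (h1 : a ≠ 1) : rneg a = a := by
  have hsq : a * a = rbot := mid_sq hpl hwnm hs h0 h1
  have hale : a ≤ rneg a := (hle a a rbot).1 (le_of_eq hsq)
  have hn0 : rneg a ≠ rbot := fun h => h1 (by rw [← hinv a, h, rneg_rbot])
  have hn1 : rneg a ≠ 1 := fun h => h0 (by rw [← hinv a, h, rneg_one])
  have hsq2 : rneg a * rneg a = rbot := mid_sq hpl hwnm hs hn0 hn1
  have h2 : rneg a ≤ rneg (rneg a) := (hle (rneg a) (rneg a) rbot).1 (le_of_eq hsq2)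
  rw [hinv a] at h2
  exact le_antisymm h2 hale

lemma mid_unique (hpl : ∀ x y : A, himp x y ⊔ himp y x = 1)
    (hinv : ∀ x : A, rneg (rneg x) = x)
    (hwnm : ∀ x y : A, rneg (x * y) ⊔ himp (x ⊓ y) (x * y) = 1)
    (hs : Simple A) {a b : A} (ha0 : a ≠ rbot) (ha1 : a ≠ 1)
    (hb0 : b ≠ rbot) (hb1 : b ≠ 1) : a = b := by
  have hra : rneg a = a := mid_rneg hpl hinv hwnm hs ha0 ha1
  have hrb : rneg b = b := mid_rneg hpl hinv hwnm hs hb0 hb1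
  rcases rl_total hpl hs a b with h | h
  · have h2 := rneg_anti h
    rw [hra, hrb] at h2
    exact le_antisymm h h2
  · have h2 := rneg_anti h
    rw [hra, hrb] at h2
    exact le_antisymm h2 h

end Helper

theorem stmt17 (A : Type*) [ResLat A]
    (hpl : ∀ x y : A, himp x y ⊔ himp y x = 1)
    (hinv : ∀ x : A, rneg (rneg x) = x)
    (hwnm : ∀ x y : A, rneg (x * y) ⊔ himp (x ⊓ y) (x * y) = 1)
    (hsimple : Simple A) :
    (∃ a b c : A, ∀ x : A, x = a ∨ x = b ∨ x = c) ∧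
    ∃ f : A → L3, Function.Injective f ∧ IsHom f := by
  classical
  have hb1 : (rbot : A) ≠ 1 := rbot_ne_one_of_simple hsimple
  set f : A → L3 := fun x => if x = rbot then L3.z else if x = (1 : A) then L3.o else L3.h
    with hfdef
  have f0 : f rbot = L3.z := by simp [hfdef]
  have f1 : f (1 : A) = L3.o := by simp [hfdef, Ne.symm hb1]
  have i1 : ∀ x : A, rbot ⊓ x = rbot := fun x => inf_eq_left.2 (ResLat.rbot_le x)
  have i2 : ∀ x : A, x ⊓ rbot = rbot := fun x => inf_eq_right.2 (ResLat.rbot_le x)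
  have i3 : ∀ x : A, x ⊓ 1 = x := fun x => inf_eq_left.2 (ResLat.le_one x)
  have i4 : ∀ x : A, 1 ⊓ x = x := fun x => inf_eq_right.2 (ResLat.le_one x)
  have s1 : ∀ x : A, rbot ⊔ x = x := fun x => sup_eq_right.2 (ResLat.rbot_le x)
  have s2 : ∀ x : A, x ⊔ rbot = x := fun x => sup_eq_left.2 (ResLat.rbot_le x)
  have s3 : ∀ x : A, x ⊔ 1 = 1 := fun x => sup_eq_right.2 (ResLat.le_one x)
  have s4 : ∀ x : A, 1 ⊔ x = 1 := fun x => sup_eq_left.2 (ResLat.le_one x)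
  by_cases hm : ∃ m : A, m ≠ rbot ∧ m ≠ 1
  · obtain ⟨m, hm0, hm1⟩ := hm
    have fm : f m = L3.h := by simp [hfdef, hm0, hm1]
    have tri : ∀ x : A, x = rbot ∨ x = m ∨ x = 1 := by
      intro x
      by_cases h0 : x = rbot
      · exact Or.inl h0
      by_cases h1 : x = 1
      · exact Or.inr (Or.inr h1)
      exact Or.inr (Or.inl (mid_unique hpl hinv hwnm hsimple h0 h1 hm0 hm1))
    have hmm : m * m = rbot := mid_sq hpl hwnm hsimple hm0 hm1
    have hrm : himp m rbot = m := mid_rneg hpl hinv hwnm hsimple hm0 hm1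
    have hi1b : himp (1 : A) rbot = rbot := rneg_one
    have himm : himp m m = 1 := le_iff_himp.1 le_rfl
    have him1 : himp m (1 : A) = 1 := himp_any_one m
    have h1m : himp (1 : A) m = m := himp_one_left m
    have i5 : m ⊓ m = m := inf_idem m
    have s5 : m ⊔ m = m := sup_idem m
    refine ⟨⟨rbot, m, 1, tri⟩, f, ?_, ?_, ?_, ?_, ?_, f0, f1⟩
    · intro x y h
      rcases tri x with rfl | rfl | rfl <;> rcases tri y with rfl | rfl | rfl <;>
        first
          | rfl
          | (simp only [f0, f1, fm] at h; exact absurd h (by decide))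
    · intro x y
      rcases tri x with rfl | rfl | rfl <;> rcases tri y with rfl | rfl | rfl <;>
        simp only [rbot_mul, mul_rbot, one_mul, mul_one, hmm, f0, f1, fm] <;> rfl
    · intro x y
      rcases tri x with rfl | rfl | rfl <;> rcases tri y with rfl | rfl | rfl <;>
        simp only [himp_rbot_any, himp_any_one, himp_one_left, hrm, hi1b, himm, him1, h1m,
          f0, f1, fm] <;> rfl
    · intro x y
      rcases tri x with rfl | rfl | rfl <;> rcases tri y with rfl | rfl | rfl <;>
        simp only [i1, i2, i3, i4, i5, f0, f1, fm] <;> rfl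
    · intro x y
      rcases tri x with rfl | rfl | rfl <;> rcases tri y with rfl | rfl | rfl <;>
        simp only [s1, s2, s3, s4, s5, f0, f1, fm] <;> rfl
  · push_neg at hm
    have tri : ∀ x : A, x = rbot ∨ x = 1 := by
      intro x
      by_cases h0 : x = rbot
      · exact Or.inl h0
      · exact Or.inr (hm x h0)
    have hi1b : himp (1 : A) rbot = rbot := rneg_one
    refine ⟨⟨rbot, rbot, 1, fun x => (tri x).imp id Or.inr⟩, f, ?_, ?_, ?_, ?_, ?_, f0, f1⟩
    · intro x y h
      rcases tri x with rfl | rfl <;> rcases tri y with rfl | rfl <;>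
        first
          | rfl
          | (simp only [f0, f1] at h; exact absurd h (by decide))
    · intro x y
      rcases tri x with rfl | rfl <;> rcases tri y with rfl | rfl <;>
        simp only [rbot_mul, mul_rbot, one_mul, mul_one, f0, f1] <;> rfl
    · intro x y
      rcases tri x with rfl | rfl <;> rcases tri y with rfl | rfl <;>
        simp only [himp_rbot_any, himp_any_one, himp_one_left, hi1b, f0, f1] <;> rfl
    · intro x y
      rcases tri x with rfl | rfl <;> rcases tri y with rfl | rfl <;>
        simp only [i1, i2, i3, i4, f0, f1] <;> rfl
    · intro x y
      rcases tri x with rfl | rfl <;> rcases tri y with rfl | rfl <;>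
        simp only [s1, s2, s3, s4, f0, f1] <;> rfl
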